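/- arXiv:1912.03919 — 2 statements merged into one kernel-verified Lean document; each statement's English description precedes it below -/
import Mathlib

section
/- For every integer k ≥ 2, the star-like tree S(2,2,…,2) on 2k+3 vertices, consisting of a central vertex with k+1 paths of length 2 attached, has no total [1,k]-dominating set. -/
/-- `D` is a `[1,k]`-dominating set of `G`: every vertex outside `D` is adjacent to
at least one and at most `k` vertices of `D`. -/
def IsOneKDom {V : Type*} (G : SimpleGraph V) (k : ℕ) (D : Set V) : Prop :=
  ∀ v ∉ D, 1 ≤ {u ∈ D | G.Adj v u}.ncard ∧ {u ∈ D | G.Adj v u}.ncard ≤ k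

/-- `D` is a total `[1,k]`-dominating set of `G`: every vertex is adjacent to
at least one and at most `k` vertices of `D`. -/
def IsTotalOneKDom {V : Type*} (G : SimpleGraph V) (k : ℕ) (D : Set V) : Prop :=
  ∀ v : V, 1 ≤ {u ∈ D | G.Adj v u}.ncard ∧ {u ∈ D | G.Adj v u}.ncard ≤ k

/-- The `[1,k]`-domination number: minimum cardinality of a `[1,k]`-dominating set. -/
noncomputable def oneKDomNum {V : Type*} [Fintype V] (G : SimpleGraph V) (k : ℕ) : ℕ :=
  sInf {m | ∃ D : Set V, IsOneKDom G k D ∧ D.ncard = m}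

/-- The total `[1,k]`-domination number: minimum cardinality of a total
`[1,k]`-dominating set. -/
noncomputable def totalOneKDomNum {V : Type*} [Fintype V] (G : SimpleGraph V) (k : ℕ) : ℕ :=
  sInf {m | ∃ D : Set V, IsTotalOneKDom G k D ∧ D.ncard = m}

/-- The lexicographic product `G ∘ H`. -/
def lexProd {α β : Type*} (G : SimpleGraph α) (H : SimpleGraph β) :
    SimpleGraph (α × β) where
  Adj a b := G.Adj a.1 b.1 ∨ (a.1 = b.1 ∧ H.Adj a.2 b.2)
  symm := by
    constructor
    rintro ⟨g, h⟩ ⟨g', h'⟩ (hadj | ⟨rfl, hadj⟩)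
    · exact Or.inl hadj.symm
    · exact Or.inr ⟨rfl, hadj.symm⟩
  loopless := by
    constructor
    rintro ⟨g, h⟩ (hadj | ⟨-, hadj⟩)
    · exact G.irrefl hadj
    · exact H.irrefl hadj

/-- The star-like tree `S(2,…,2)` with `m` legs of length 2: the central vertex is
`none`, the support vertices are `some (i, 0)` (adjacent to the centre) and the
leaves are `some (i, 1)` (adjacent to `some (i, 0)`). -/
def spider (m : ℕ) : SimpleGraph (Option (Fin m × Fin 2)) :=
  SimpleGraph.fromRel (fun a b =>
    match a, b with
    | none, some (_, j) => j = 0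
    | some (i, j), some (i', j') => i = i' ∧ j = 0 ∧ j' = 1
    | _, _ => False)

namespace IsTotalOneKDom

variable {V : Type*} {G : SimpleGraph V} {k : ℕ} {D : Set V}

theorem mem_of_forall_adj_eq (hD : IsTotalOneKDom G k D) {v u : V}
    (hu : ∀ w, G.Adj v w → w = u) : u ∈ D := by
  obtain ⟨w, hwD, hvw⟩ := Set.nonempty_of_ncard_ne_zero (Nat.one_le_iff_ne_zero.1 (hD v).1)
  exact hu w hvw ▸ hwD

/-- `1 ≤ ncard` makes the `D`-neighbourhood of `v` finite (an infinite set has `ncard = 0`). -/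
theorem ncard_le_of_subset (hD : IsTotalOneKDom G k D) {v : V} {S : Set V}
    (hSD : S ⊆ D) (hS : ∀ u ∈ S, G.Adj v u) : S.ncard ≤ k :=
  (Set.ncard_le_ncard (t := {u ∈ D | G.Adj v u}) (fun u hu => ⟨hSD hu, hS u hu⟩)
    (Set.finite_of_ncard_pos (hD v).1)).trans (hD v).2

end IsTotalOneKDom

theorem spider_adj_none_some_zero {m : ℕ} (i : Fin m) : (spider m).Adj none (some (i, 0)) := by
  simp [spider]

theorem spider_eq_of_adj_leaf {m : ℕ} (i : Fin m) {u : Option (Fin m × Fin 2)}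
    (h : (spider m).Adj (some (i, 1)) u) : u = some (i, 0) := by
  rcases u with _ | ⟨i', j'⟩
  · simp [spider] at h
  · fin_cases j' <;> simp_all [spider]

theorem spider_no_totalOneKDom_general (k : ℕ) :
    ¬ ∃ D : Set (Option (Fin (k + 1) × Fin 2)), IsTotalOneKDom (spider (k + 1)) k D := by
  rintro ⟨D, hD⟩
  have hsupport : ∀ i : Fin (k + 1), some (i, (0 : Fin 2)) ∈ D := fun i =>
    hD.mem_of_forall_adj_eq fun _ => spider_eq_of_adj_leaf i
  have hcard : (Set.range fun i : Fin (k + 1) => some (i, (0 : Fin 2))).ncard = k + 1 := by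
    rw [Set.ncard_range_of_injective fun a b h => by simpa using h, Nat.card_fin]
  have hle := hD.ncard_le_of_subset (v := none) (Set.range_subset_iff.2 hsupport)
    (by rintro _ ⟨i, rfl⟩; exact spider_adj_none_some_zero i)
  omega

/-- For every `k ≥ 2`, the star-like tree `S(2,…,2)` on `2k+3` vertices (a central
vertex with `k+1` paths of length 2 attached) has no total `[1,k]`-dominating set. -/
theorem spider_no_totalOneKDom (k : ℕ) (hk : 2 ≤ k) :
    ¬ ∃ D : Set (Option (Fin (k + 1) × Fin 2)), IsTotalOneKDom (spider (k + 1)) k D :=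
  spider_no_totalOneKDom_general k
end

section
/- Let t ≥ 0 be an integer. Let G₁ = S(2,2,2) be the star-like tree with central vertex v₇ of degree 3, support vertices v₂, v₄, v₆ adjacent to v₇, and leaves v₁, v₃, v₅ adjacent to v₂, v₄, v₆ respectively. Let Γ be the graph obtained from the lexicographic product G₁ ∘ K̄₃ by adding t new vertices a₁, …, a_t, each joined to all three vertices of the H-layer H^{v₂}. Then every [1,2]-dominating set S of Γ is equal to V(Γ); in particular γ_{[1,2]}(Γ) = 21 + t. -/
/-- The graph `Γ` of Theorem 3 (for `k = 2`): the lexicographic product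
`S(2,2,2) ∘ K̄₃` (on the `inl` vertices), together with `t` extra vertices
`a₁, …, a_t` (the `inr` vertices), each joined to the three vertices of the layer
over the support vertex `v₂ = some (0, 0)` of the spider `S(2,2,2)`. -/
def GammaGraph (t : ℕ) :
    SimpleGraph ((Option (Fin 3 × Fin 2) × Fin 3) ⊕ Fin t) :=
  SimpleGraph.fromRel (fun a b =>
    match a, b with
    | .inl u, .inl w => (lexProd (spider 3) (⊥ : SimpleGraph (Fin 3))).Adj u w
    | .inr _, .inl (some (i, j), _) => i = 0 ∧ j = 0
    | _, _ => False)

section OneKDom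

variable {V : Type*} {G : SimpleGraph V} {k : ℕ} {D : Set V} {v : V}

lemma isOneKDom_univ (G : SimpleGraph V) (k : ℕ) : IsOneKDom G k Set.univ :=
  fun v hv => absurd (Set.mem_univ v) hv

lemma IsOneKDom.exists_adj_mem (hD : IsOneKDom G k D) (hv : v ∉ D) : ∃ u ∈ D, G.Adj v u :=
  Set.nonempty_of_ncard_ne_zero (Nat.one_le_iff_ne_zero.mp (hD v hv).1)

lemma IsOneKDom.mem_of_injective_adj (hD : IsOneKDom G k D) (f : Fin (k + 1) → V)
    (hf : Function.Injective f) (hfD : ∀ i, f i ∈ D) (hadj : ∀ i, G.Adj v (f i)) : v ∈ D := by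
  by_contra hv
  obtain ⟨hpos, hle⟩ := hD v hv
  have hsub : Set.range f ⊆ {u ∈ D | G.Adj v u} := by
    rintro _ ⟨i, rfl⟩
    exact ⟨hfD i, hadj i⟩
  have hcard : k + 1 ≤ {u ∈ D | G.Adj v u}.ncard := by
    calc k + 1 = (Set.range f).ncard := by
          rw [Set.ncard_range_of_injective hf, Nat.card_eq_fintype_card, Fintype.card_fin]
      _ ≤ _ := Set.ncard_le_ncard hsub (Set.finite_of_ncard_pos hpos)
  omega

lemma oneKDomNum_eq_card [Fintype V] (h : ∀ D, IsOneKDom G k D → D = Set.univ) :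
    oneKDomNum G k = Fintype.card V := by
  have hnums : {m | ∃ D : Set V, IsOneKDom G k D ∧ D.ncard = m} = {Fintype.card V} := by
    ext m
    simp only [Set.mem_ofPred_eq, Set.mem_singleton_iff]
    constructor
    · rintro ⟨D, hD, rfl⟩
      rw [h D hD, Set.ncard_univ, Nat.card_eq_fintype_card]
    · rintro rfl
      exact ⟨Set.univ, isOneKDom_univ G k, by rw [Set.ncard_univ, Nat.card_eq_fintype_card]⟩
  rw [oneKDomNum, hnums, csInf_singleton]

end OneKDom

lemma lexProd_bot_adj {α β : Type*} (G : SimpleGraph α) (a b : α × β) :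
    (lexProd G ⊥).Adj a b ↔ G.Adj a.1 b.1 := by
  simp [lexProd]

section Spider

variable {m : ℕ}

lemma spider_adj_center_support (i : Fin m) : (spider m).Adj none (some (i, 0)) := by
  simp [spider]

lemma spider_adj_support_leaf (i : Fin m) : (spider m).Adj (some (i, 0)) (some (i, 1)) := by
  simp [spider]

lemma spider_adj_leaf_iff (i : Fin m) (u : Option (Fin m × Fin 2)) :
    (spider m).Adj (some (i, 1)) u ↔ u = some (i, 0) := by
  rcases u with _ | ⟨j, l⟩
  · simp [spider]
  · fin_cases l <;> simp [spider, eq_comm]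

end Spider

section GammaGraph

variable {t : ℕ}

lemma gammaGraph_adj_inl (u w : Option (Fin 3 × Fin 2) × Fin 3) :
    (GammaGraph t).Adj (.inl u) (.inl w) ↔ (spider 3).Adj u.1 w.1 := by
  rw [GammaGraph, SimpleGraph.fromRel_adj, ← lexProd_bot_adj (β := Fin 3)]
  constructor
  · rintro ⟨-, h | h⟩
    exacts [h, h.symm]
  · intro h
    exact ⟨fun huw => h.ne (Sum.inl_injective huw), Or.inl h⟩

lemma gammaGraph_adj_inr (a : Fin t) (y : Fin 3) :
    (GammaGraph t).Adj (.inr a) (.inl (some (0, 0), y)) := by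
  simp [GammaGraph]

lemma gammaGraph_adj_leaf_iff (i x : Fin 3) (u : (Option (Fin 3 × Fin 2) × Fin 3) ⊕ Fin t) :
    (GammaGraph t).Adj (.inl (some (i, 1), x)) u ↔ ∃ y, u = .inl (some (i, 0), y) := by
  rcases u with ⟨g, y⟩ | a
  · simp [gammaGraph_adj_inl, spider_adj_leaf_iff]
  · simp [GammaGraph]

variable {S : Set ((Option (Fin 3 × Fin 2) × Fin 3) ⊕ Fin t)}

lemma IsOneKDom.mem_of_adj_layer (hS : IsOneKDom (GammaGraph t) 2 S)
    {v : (Option (Fin 3 × Fin 2) × Fin 3) ⊕ Fin t} {g : Option (Fin 3 × Fin 2)}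
    (hadj : ∀ y, (GammaGraph t).Adj v (.inl (g, y))) (hlayer : ∀ y, .inl (g, y) ∈ S) :
    v ∈ S :=
  hS.mem_of_injective_adj (fun y => .inl (g, y))
    (fun _ _ h => (Prod.ext_iff.mp (Sum.inl_injective h)).2) hlayer hadj

lemma IsOneKDom.exists_notMem_layer (hS : IsOneKDom (GammaGraph t) 2 S)
    {v : (Option (Fin 3 × Fin 2) × Fin 3) ⊕ Fin t} {g : Option (Fin 3 × Fin 2)}
    (hv : v ∉ S) (hadj : ∀ y, (GammaGraph t).Adj v (.inl (g, y))) :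
    ∃ y, .inl (g, y) ∉ S := by
  by_contra! hlayer
  exact hv (hS.mem_of_adj_layer hadj hlayer)

lemma IsOneKDom.leaf_mem (hS : IsOneKDom (GammaGraph t) 2 S) (i x : Fin 3) :
    .inl (some (i, 1), x) ∈ S := by
  by_contra hleaf
  obtain ⟨y, hy⟩ := hS.exists_notMem_layer hleaf fun y =>
    (gammaGraph_adj_leaf_iff i x _).2 ⟨y, rfl⟩
  obtain ⟨z, hz⟩ := hS.exists_notMem_layer hy fun z =>
    (gammaGraph_adj_inl _ (none, z)).2 (spider_adj_center_support i).symm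
  obtain ⟨j, hj⟩ : ∃ j : Fin 3, ∀ w, .inl (some (j, 0), w) ∉ S := by
    by_contra! hlegs
    choose w hw using hlegs
    refine hz (hS.mem_of_injective_adj (fun j => .inl (some (j, 0), w j)) ?_ hw fun j =>
      (gammaGraph_adj_inl _ _).2 (spider_adj_center_support j))
    intro j j' h
    simp only [Sum.inl.injEq, Prod.mk.injEq, Option.some.injEq] at h
    exact h.1.1
  have hleaves : ∀ x', .inl (some (j, 1), x') ∈ S := by
    intro x'
    by_contra hx'
    obtain ⟨u, huS, hu⟩ := hS.exists_adj_mem hx'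
    obtain ⟨w, rfl⟩ := (gammaGraph_adj_leaf_iff j x' u).1 hu
    exact hj w huS
  exact hj 0 (hS.mem_of_adj_layer (fun x' =>
    (gammaGraph_adj_inl _ _).2 (spider_adj_support_leaf j)) hleaves)

lemma IsOneKDom.support_mem (hS : IsOneKDom (GammaGraph t) 2 S) (i y : Fin 3) :
    .inl (some (i, 0), y) ∈ S :=
  hS.mem_of_adj_layer (fun _ => (gammaGraph_adj_inl _ _).2 (spider_adj_support_leaf i))
    (hS.leaf_mem i)

lemma IsOneKDom.center_mem (hS : IsOneKDom (GammaGraph t) 2 S) (z : Fin 3) :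
    .inl (none, z) ∈ S :=
  hS.mem_of_adj_layer (fun _ => (gammaGraph_adj_inl _ _).2 (spider_adj_center_support 0))
    (hS.support_mem 0)

lemma IsOneKDom.inr_mem (hS : IsOneKDom (GammaGraph t) 2 S) (a : Fin t) : .inr a ∈ S :=
  hS.mem_of_adj_layer (gammaGraph_adj_inr a) (hS.support_mem 0)

lemma IsOneKDom.eq_univ_of_gammaGraph (hS : IsOneKDom (GammaGraph t) 2 S) : S = Set.univ := by
  refine Set.eq_univ_of_forall ?_
  rintro (⟨_ | ⟨i, l⟩, y⟩ | a)
  · exact hS.center_mem y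
  · fin_cases l
    exacts [hS.support_mem i y, hS.leaf_mem i y]
  · exact hS.inr_mem a

end GammaGraph

/-- Every `[1,2]`-dominating set of `Γ` is the whole vertex set; in particular
`γ_[1,2](Γ) = 21 + t`. -/
theorem gammaGraph_oneKDom_eq_univ (t : ℕ) :
    (∀ S : Set ((Option (Fin 3 × Fin 2) × Fin 3) ⊕ Fin t),
      IsOneKDom (GammaGraph t) 2 S → S = Set.univ) ∧
    oneKDomNum (GammaGraph t) 2 = 21 + t := by
  have hdom : ∀ S : Set ((Option (Fin 3 × Fin 2) × Fin 3) ⊕ Fin t),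
      IsOneKDom (GammaGraph t) 2 S → S = Set.univ :=
    fun _ hS => hS.eq_univ_of_gammaGraph
  refine ⟨hdom, ?_⟩
  rw [oneKDomNum_eq_card hdom]
  simp
end
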